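/- arXiv:2303.17917 — 6 statements merged into one kernel-verified Lean document; each statement's English description precedes it below -/
import Mathlib

section
/- Let E be a finite-dimensional real normed vector space and let R = (R¹,R²) : E × E → E × E be a continuously differentiable (C¹) discretization map on E. Then for every q ∈ E the total Fréchet derivative DR(q,0) : E × E → E × E is a linear isomorphism, and consequently R is a local diffeomorphism at every point (q,0) of the zero section: there exist open neighborhoods U of (q,0) and V of (q,q) such that R restricts to a homeomorphism from U onto V whose inverse is differentiable. -/
/-!
Differentiating `R (p, 0) = (p, p)` in `p` gives `DR(q,0) (a, 0) = (a, a)`, and the second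
condition says that `DR(q,0) (0, b)` has second minus first component equal to `b`. Hence
`DR(q,0) (a, b) = (a + X b, a + X b + b)` for a linear `X`, which is inverted explicitly by
`(u, w) ↦ (u - X (w - u), w - u)`. The inverse function theorem does the rest.
-/

open Set ContinuousLinearMap

section LinearAlgebra

variable {𝕜 E : Type*} [Ring 𝕜] [AddCommGroup E] [Module 𝕜 E] [TopologicalSpace E]
  [IsTopologicalAddGroup E]

theorem ContinuousLinearMap.exists_equiv_of_apply_inl_of_snd_sub_fst_apply_inr
    (D : E × E →L[𝕜] E × E) (hinl : ∀ a, D (a, 0) = (a, a))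
    (hinr : ∀ b, (D (0, b)).2 - (D (0, b)).1 = b) :
    ∃ L : (E × E) ≃L[𝕜] (E × E), (L : E × E →L[𝕜] E × E) = D := by
  let X : E →L[𝕜] E := (fst 𝕜 E E).comp (D.comp (inr 𝕜 E E))
  have hD : ∀ a b, D (a, b) = (a + X b, a + X b + b) := by
    intro a b
    have hsplit : D (a, b) = D (a, 0) + D (0, b) := by
      rw [← map_add, Prod.mk_add_mk, add_zero, zero_add]
    have hsnd : (D (0, b)).2 = b + X b := sub_eq_iff_eq_add.mp (hinr b)
    rw [hsplit, hinl]
    ext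
    · rfl
    · simp only [Prod.snd_add, hsnd]; abel
  let S : E × E →L[𝕜] E := snd 𝕜 E E - fst 𝕜 E E
  refine ⟨ContinuousLinearEquiv.equivOfInverse D ((fst 𝕜 E E - X.comp S).prod S) ?_ ?_, rfl⟩
  · rintro ⟨a, b⟩
    simp [S, hD]
  · rintro ⟨u, w⟩
    simp [S, hD]

end LinearAlgebra

section Derivative

variable {𝕜 E : Type*} [NontriviallyNormedField 𝕜] [NormedAddCommGroup E] [NormedSpace 𝕜 E]
  {R : E × E → E × E} {D : E × E →L[𝕜] E × E} {q : E}

theorem HasFDerivAt.apply_inl_eq_of_apply_zero_eq_diag (hD : HasFDerivAt R D (q, 0))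
    (h0 : ∀ p, R (p, 0) = (p, p)) (a : E) : D (a, 0) = (a, a) := by
  have hcomp : HasFDerivAt (fun p => R (p, 0)) (D.comp (inl 𝕜 E E)) q :=
    hD.comp q (hasFDerivAt_prodMk_left q 0)
  have hdiag : HasFDerivAt (fun p => R (p, 0))
      ((ContinuousLinearMap.id 𝕜 E).prod (ContinuousLinearMap.id 𝕜 E)) q := by
    simpa only [h0, id] using (hasFDerivAt_id q).prodMk (hasFDerivAt_id q)
  simpa using congr($(hcomp.unique hdiag) a)

theorem HasFDerivAt.snd_sub_fst_apply_inr (hD : HasFDerivAt R D (q, 0))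
    (h1 : HasFDerivAt (fun v => (R (q, v)).2 - (R (q, v)).1) (ContinuousLinearMap.id 𝕜 E) 0)
    (b : E) :
    (D (0, b)).2 - (D (0, b)).1 = b := by
  have hcomp : HasFDerivAt (fun v => R (q, v)) (D.comp (inr 𝕜 E E)) 0 :=
    hD.comp 0 (hasFDerivAt_prodMk_right q 0)
  simpa using congr($((hcomp.snd.sub hcomp.fst).unique h1) b)

end Derivative

section InverseFunction

variable {𝕜 E F : Type*} [RCLike 𝕜] [NormedAddCommGroup E] [NormedSpace 𝕜 E] [CompleteSpace E]
  [NormedAddCommGroup F] [NormedSpace 𝕜 F]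

theorem ContDiff.exists_open_bijOn_differentiable_inverse {f : E → F} (hf : ContDiff 𝕜 1 f)
    {x : E} (L : E ≃L[𝕜] F) (hL : (L : E →L[𝕜] F) = fderiv 𝕜 f x) :
    ∃ U : Set E, ∃ V : Set F, IsOpen U ∧ IsOpen V ∧ x ∈ U ∧ f x ∈ V ∧
      BijOn f U V ∧ ContinuousOn f U ∧
      ∃ g : F → E, InvOn g f U V ∧ ContinuousOn g V ∧ ∀ y ∈ V, DifferentiableAt 𝕜 g y := by
  have hderiv : ∀ z, HasFDerivAt f (fderiv 𝕜 f z) z := fun z =>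
    (hf.differentiable one_ne_zero z).hasFDerivAt
  let e := hf.contDiffAt.toOpenPartialHomeomorph f (hL ▸ hderiv x) one_ne_zero
  let W : Set E := fderiv 𝕜 f ⁻¹' range ((↑) : (E ≃L[𝕜] F) → E →L[𝕜] F)
  have hW : IsOpen W := ContinuousLinearEquiv.isOpen.preimage (hf.continuous_fderiv one_ne_zero)
  -- shrinking the chart to where `Df` stays invertible makes its inverse differentiable
  -- on the whole target, not just at `f x`
  let e' := e.restrOpen W hW
  have hx : x ∈ e'.source := ⟨hf.contDiffAt.mem_toOpenPartialHomeomorph_source _ _, L, hL⟩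
  refine ⟨e'.source, e'.target, e'.open_source, e'.open_target, hx, e'.map_source hx, e'.bijOn,
    hf.continuous.continuousOn, e'.symm, e'.invOn, e'.continuousOn_symm, fun y hy => ?_⟩
  obtain ⟨L', hL'⟩ := (e'.map_target hy).2
  exact (e'.contDiffAt_symm hy (hL' ▸ hderiv _) hf.contDiffAt).differentiableAt one_ne_zero

end InverseFunction

/-- A `C¹` discretization map `R = (R¹,R²)` on a finite-dimensional real normed
vector space `E` has invertible total Fréchet derivative `DR(q,0)` at every
point of the zero section, and is therefore a local diffeomorphism at every
`(q,0)`: it restricts to a homeomorphism from a neighborhood `U` of `(q,0)`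
onto a neighborhood `V` of `(q,q)` whose inverse is differentiable. -/
theorem discretization_is_local_diffeo {E : Type*} [NormedAddCommGroup E]
    [NormedSpace ℝ E] [FiniteDimensional ℝ E]
    (R : E × E → E × E) (hC1 : ContDiff ℝ 1 R)
    (hdisc0 : ∀ q : E, R (q, 0) = (q, q))
    (hdisc1 : ∀ q : E, HasFDerivAt
      (fun v : E => (R (q, v)).2 - (R (q, v)).1)
      (ContinuousLinearMap.id ℝ E) 0) :
    ∀ q : E,
      (∃ L : (E × E) ≃L[ℝ] (E × E),
        (L : (E × E) →L[ℝ] (E × E)) = fderiv ℝ R (q, 0)) ∧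
      ∃ U V : Set (E × E), IsOpen U ∧ IsOpen V ∧ (q, 0) ∈ U ∧ (q, q) ∈ V ∧
        Set.BijOn R U V ∧ ContinuousOn R U ∧
        ∃ g : E × E → E × E, Set.InvOn g R U V ∧ ContinuousOn g V ∧
          ∀ y ∈ V, DifferentiableAt ℝ g y := by
  intro q
  have hD : HasFDerivAt R (fderiv ℝ R (q, 0)) (q, 0) :=
    (hC1.differentiable one_ne_zero (q, 0)).hasFDerivAt
  obtain ⟨L, hL⟩ := (fderiv ℝ R (q, 0)).exists_equiv_of_apply_inl_of_snd_sub_fst_apply_inr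
    (hD.apply_inl_eq_of_apply_zero_eq_diag hdisc0) (hD.snd_sub_fst_apply_inr (hdisc1 q))
  refine ⟨⟨L, hL⟩, ?_⟩
  simpa only [hdisc0] using hC1.exists_open_bijOn_differentiable_inverse L hL
end

section
/- Let E be a finite-dimensional real normed vector space and let R = (R¹,R²) : E × E → E × E be a twice continuously differentiable (C²) discretization map on E. Define the tangent lift Ψ : (E × E) × (E × E) → (E × E) × (E × E) by Ψ((q,q̇),(v,v̇)) = ((R¹(q,v), DR¹(q,v)(q̇,v̇)), (R²(q,v), DR²(q,v)(q̇,v̇))), where DRᵃ(q,v) denotes the total Fréchet derivative of Rᵃ at (q,v). Then Ψ is a discretization map on E × E: (1) Ψ((q,q̇),(0,0)) = ((q,q̇),(q,q̇)) for all (q,q̇) ∈ E × E; (2) for every (q,q̇) ∈ E × E, the Fréchet derivative at (v,v̇) = (0,0) of the map (v,v̇) ↦ Ψ²((q,q̇),(v,v̇)) − Ψ¹((q,q̇),(v,v̇)) is the identity map on E × E. -/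
/-!
Write `S = R² - R¹`, so that `Ψ²((q,q̇),(v,v̇)) - Ψ¹((q,q̇),(v,v̇)) = (S(q,v), DS(q,v)(q̇,v̇))`.
Since `R(q,0) = (q,q)` on the zero section, both `DRᵃ(q,0)` restrict to the identity on
horizontal vectors `(q̇,0)`, which gives `Ψ(z,0) = (z,z)`. The derivative in `(v,v̇)` at `0` sends
`(a,b)` to `(∂_v S(q,0) a, D²S(q,0)((0,a),(q̇,0)) + DS(q,0)(0,b))`. Since `∂_v S(q',0) = id` for
every `q'`, we get `DS(q,0)(0,b) = b`, and by symmetry of `D²S` the mixed term is the derivative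
in `q` of the constant `q' ↦ DS(q',0)(0,a) = a`, hence zero.
-/

/-- The tangent lift of a map `R = (R¹,R²) : E × E → E × E`:
`Ψ((q,q̇),(v,v̇)) = ((R¹(q,v), DR¹(q,v)(q̇,v̇)), (R²(q,v), DR²(q,v)(q̇,v̇)))`,
where `DRᵃ(q,v)` is the total Fréchet derivative of `Rᵃ` at `(q,v)`. -/
noncomputable def tangentLift {E : Type*} [NormedAddCommGroup E]
    [NormedSpace ℝ E] (R : E × E → E × E)
    (zw : (E × E) × (E × E)) : (E × E) × (E × E) :=
  (((R (zw.1.1, zw.2.1)).1,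
      fderiv ℝ (fun p : E × E => (R p).1) (zw.1.1, zw.2.1) (zw.1.2, zw.2.2)),
   ((R (zw.1.1, zw.2.1)).2,
      fderiv ℝ (fun p : E × E => (R p).2) (zw.1.1, zw.2.1) (zw.1.2, zw.2.2)))

open ContinuousLinearMap Topology

section PartialDerivatives

variable {𝕜 : Type*} [NontriviallyNormedField 𝕜]
  {E F G : Type*} [NormedAddCommGroup E] [NormedSpace 𝕜 E] [NormedAddCommGroup F]
  [NormedSpace 𝕜 F] [NormedAddCommGroup G] [NormedSpace 𝕜 G]
  {f : E × F → G} {x : E} {y : F}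

theorem fderiv_comp_inl_eq (hf : DifferentiableAt 𝕜 f (x, y)) {L : E →L[𝕜] G}
    (hL : HasFDerivAt (fun x' => f (x', y)) L x) : (fderiv 𝕜 f (x, y)).comp (inl 𝕜 E F) = L :=
  (hf.hasFDerivAt.comp x (hasFDerivAt_prodMk_left x y)).unique hL

theorem fderiv_comp_inr_eq (hf : DifferentiableAt 𝕜 f (x, y)) {L : F →L[𝕜] G}
    (hL : HasFDerivAt (fun y' => f (x, y')) L y) : (fderiv 𝕜 f (x, y)).comp (inr 𝕜 E F) = L :=
  (hf.hasFDerivAt.comp y (hasFDerivAt_prodMk_right x y)).unique hL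

theorem fderiv_apply_inl_eq_self {f : E × F → E} (hf : DifferentiableAt 𝕜 f (x, y))
    (h : ∀ x', f (x', y) = x') (dx : E) : fderiv 𝕜 f (x, y) (dx, 0) = dx := by
  have hid : HasFDerivAt (fun x' => f (x', y)) (.id 𝕜 E) x := by
    simp only [h]
    exact hasFDerivAt_id x
  simpa using congr($(fderiv_comp_inl_eq hf hid) dx)

theorem fderiv_fderiv_apply_inr_inl_eq_zero (hf : DifferentiableAt 𝕜 (fderiv 𝕜 f) (x, y))
    (hsymm : IsSymmSndFDerivAt 𝕜 f (x, y)) {u : F} {c : G}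
    (hconst : ∀ᶠ x' in 𝓝 x, fderiv 𝕜 f (x', y) (0, u) = c) (dx : E) :
    fderiv 𝕜 (fderiv 𝕜 f) (x, y) (0, u) (dx, 0) = 0 := by
  have hvar : HasFDerivAt (fun x' => fderiv 𝕜 f (x', y) (0, u))
      (((fderiv 𝕜 (fderiv 𝕜 f) (x, y)).comp (inl 𝕜 E F)).flip (0, u)) x := by
    have hderiv : HasFDerivAt (fun x' => fderiv 𝕜 f (x', y))
        ((fderiv 𝕜 (fderiv 𝕜 f) (x, y)).comp (inl 𝕜 E F)) x :=
      hf.hasFDerivAt.comp x (hasFDerivAt_prodMk_left x y)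
    simpa using hderiv.clm_apply (hasFDerivAt_const ((0 : E), u) x)
  have hzero : HasFDerivAt (fun x' => fderiv 𝕜 f (x', y) (0, u)) (0 : E →L[𝕜] G) x :=
    (hasFDerivAt_const c x).congr_of_eventuallyEq hconst
  rw [hsymm]
  simpa using congr($(hvar.unique hzero) dx)

theorem hasFDerivAt_fderiv_apply_right (hf : DifferentiableAt 𝕜 (fderiv 𝕜 f) (x, y))
    (dx : E) (dy : F) :
    HasFDerivAt (fun w : F × F => fderiv 𝕜 f (x, w.1) (dx, w.2))
      ((fderiv 𝕜 f (x, y)).comp ((inr 𝕜 E F).comp (snd 𝕜 F F)) +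
        ((fderiv 𝕜 (fderiv 𝕜 f) (x, y)).comp ((inr 𝕜 E F).comp (fst 𝕜 F F))).flip (dx, dy))
      (y, dy) :=
  (hf.hasFDerivAt.comp (y, dy)
      ((hasFDerivAt_prodMk_right x y).comp (y, dy) hasFDerivAt_fst)).clm_apply
    ((hasFDerivAt_prodMk_right dx dy).comp (y, dy) hasFDerivAt_snd)

end PartialDerivatives

section TangentLift

variable {E : Type*} [NormedAddCommGroup E] [NormedSpace ℝ E] {R : E × E → E × E}

theorem tangentLift_zero_of_eq_diag (q qd : E) (hR : DifferentiableAt ℝ R (q, 0))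
    (hdiag : ∀ q' : E, R (q', 0) = (q', q')) :
    tangentLift R ((q, qd), 0) = ((q, qd), (q, qd)) := by
  simp [tangentLift, hdiag, fderiv_apply_inl_eq_self hR.fst (by simp [hdiag]),
    fderiv_apply_inl_eq_self hR.snd (by simp [hdiag])]

theorem tangentLift_snd_sub_fst (z w : E × E) (hR : DifferentiableAt ℝ R (z.1, w.1)) :
    (tangentLift R (z, w)).2 - (tangentLift R (z, w)).1 =
      ((R (z.1, w.1)).2 - (R (z.1, w.1)).1,
        fderiv ℝ (fun p => (R p).2 - (R p).1) (z.1, w.1) (z.2, w.2)) := by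
  simp only [tangentLift, Prod.mk_sub_mk, fderiv_fun_sub hR.snd hR.fst, sub_apply]

end TangentLift

theorem tangentLift_is_discretization_map_general {E : Type*} [NormedAddCommGroup E]
    [NormedSpace ℝ E]
    (R : E × E → E × E) (hC2 : ContDiff ℝ 2 R)
    (hdisc0 : ∀ q : E, R (q, 0) = (q, q))
    (hdisc1 : ∀ q : E, HasFDerivAt
      (fun v : E => (R (q, v)).2 - (R (q, v)).1)
      (ContinuousLinearMap.id ℝ E) 0) :
    (∀ z : E × E, tangentLift R (z, (0 : E × E)) = (z, z)) ∧
    (∀ z : E × E, HasFDerivAt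
      (fun w : E × E => (tangentLift R (z, w)).2 - (tangentLift R (z, w)).1)
      (ContinuousLinearMap.id ℝ (E × E)) 0) := by
  have hR : Differentiable ℝ R := hC2.differentiable (by norm_num)
  refine ⟨fun ⟨q, qd⟩ => tangentLift_zero_of_eq_diag q qd (hR _) hdisc0, fun ⟨q, qd⟩ => ?_⟩
  set S : E × E → E := fun p => (R p).2 - (R p).1
  have hS : ContDiff ℝ 2 S := hC2.snd.sub hC2.fst
  have hS' : Differentiable ℝ (fderiv ℝ S) :=
    (hS.fderiv_right (m := 1) le_rfl).differentiable one_ne_zero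
  have hS_inr : ∀ q' u, fderiv ℝ S (q', 0) (0, u) = u := fun q' u =>
    congr($(fderiv_comp_inr_eq (hS.differentiable (by norm_num) _) (hdisc1 q')) u)
  have hmixed : ∀ a, fderiv ℝ (fderiv ℝ S) (q, 0) (0, a) (qd, 0) = 0 := fun a =>
    fderiv_fderiv_apply_inr_inl_eq_zero (hS' _) (hS.contDiffAt.isSymmSndFDerivAt (by simp))
      (.of_forall (hS_inr · a)) qd
  simp only [tangentLift_snd_sub_fst _ _ (hR _)]
  refine (((hdisc1 q).comp (0 : E × E) hasFDerivAt_fst).prodMk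
    (hasFDerivAt_fderiv_apply_right (hS' (q, 0)) qd 0)).congr_fderiv ?_
  refine ContinuousLinearMap.ext fun ⟨a, b⟩ => Prod.ext ?_ ?_ <;> simp [hS_inr, hmixed]

/-- If `R` is a `C²` discretization map on a finite-dimensional real normed
vector space `E`, then its tangent lift `Ψ` is a discretization map on `E × E`:
`Ψ(z,0) = (z,z)` and the Fréchet derivative at `w = 0` of
`w ↦ Ψ²(z,w) - Ψ¹(z,w)` is the identity on `E × E`. -/
theorem tangentLift_is_discretization_map {E : Type*} [NormedAddCommGroup E]
    [NormedSpace ℝ E] [FiniteDimensional ℝ E]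
    (R : E × E → E × E) (hC2 : ContDiff ℝ 2 R)
    (hdisc0 : ∀ q : E, R (q, 0) = (q, q))
    (hdisc1 : ∀ q : E, HasFDerivAt
      (fun v : E => (R (q, v)).2 - (R (q, v)).1)
      (ContinuousLinearMap.id ℝ E) 0) :
    (∀ z : E × E, tangentLift R (z, (0 : E × E)) = (z, z)) ∧
    (∀ z : E × E, HasFDerivAt
      (fun w : E × E => (tangentLift R (z, w)).2 - (tangentLift R (z, w)).1)
      (ContinuousLinearMap.id ℝ (E × E)) 0) :=
  tangentLift_is_discretization_map_general R hC2 hdisc0 hdisc1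
end

section
/- Let E be a finite-dimensional real inner product space. Define Φ : (E × E) × (E × E) → (E × E) × (E × E) by Φ(q,p,q̇,ṗ) = ((q − q̇/2, p − ṗ/2), (q + q̇/2, p + ṗ/2)) (the cotangent lift of the midpoint discretization map). Then Φ is a symplectomorphism from the tangent-lifted symplectic form to the difference form Ω₁₂: Φ is a bijection and for all u = (q,p,q̇,ṗ) and u' = (q',p',q̇',ṗ') in (E×E)×(E×E), Ω₁₂(Φ(u), Φ(u')) = d_Tω(u,u'), where d_Tω(u,u') = ⟨q,ṗ'⟩ − ⟨q',ṗ⟩ + ⟨q̇,p'⟩ − ⟨q̇',p⟩ and Ω₁₂((z₀,z₁),(z₀',z₁')) = ω(z₁,z₁') − ω(z₀,z₀') with ω((a,b),(a',b')) = ⟨a,b'⟩ − ⟨a',b⟩. -/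
open scoped RealInnerProductSpace

/-- The canonical symplectic form on `T*E ≅ E × E`:
`ω((a,b),(a',b')) = ⟨a,b'⟩ - ⟨a',b⟩`. -/
noncomputable def canSymp {E : Type*} [NormedAddCommGroup E]
    [InnerProductSpace ℝ E] (z z' : E × E) : ℝ :=
  ⟪z.1, z'.2⟫ - ⟪z'.1, z.2⟫

/-- The difference form `Ω₁₂((z₀,z₁),(z₀',z₁')) = ω(z₁,z₁') - ω(z₀,z₀')`
on `T*E × T*E`. -/
noncomputable def Omega12 {E : Type*} [NormedAddCommGroup E]
    [InnerProductSpace ℝ E] (Z Z' : (E × E) × (E × E)) : ℝ :=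
  canSymp Z.2 Z'.2 - canSymp Z.1 Z'.1

/-- The tangent lift `d_Tω` of the canonical symplectic form on
`T(T*E) ≅ (E × E) × (E × E)` with coordinates `((q,p),(q̇,ṗ))`:
`d_Tω(u,u') = ⟨q,ṗ'⟩ - ⟨q',ṗ⟩ + ⟨q̇,p'⟩ - ⟨q̇',p⟩`. -/
noncomputable def tangentLiftSymp {E : Type*} [NormedAddCommGroup E]
    [InnerProductSpace ℝ E] (u u' : (E × E) × (E × E)) : ℝ :=
  ⟪u.1.1, u'.2.2⟫ - ⟪u'.1.1, u.2.2⟫ + ⟪u.2.1, u'.1.2⟫ - ⟪u'.2.1, u.1.2⟫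

/-- The cotangent lift of the midpoint discretization map,
`Φ(q,p,q̇,ṗ) = ((q - q̇/2, p - ṗ/2), (q + q̇/2, p + ṗ/2))`, is a bijection of
`(E × E) × (E × E)` and a symplectomorphism from the tangent-lifted symplectic
form `d_Tω` to the difference form `Ω₁₂`. -/
theorem midpoint_cotangent_lift_symplectomorphism {E : Type*}
    [NormedAddCommGroup E] [InnerProductSpace ℝ E] [FiniteDimensional ℝ E] :
    Function.Bijective (fun u : (E × E) × (E × E) =>
      ((u.1.1 - (1 / 2 : ℝ) • u.2.1, u.1.2 - (1 / 2 : ℝ) • u.2.2),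
       (u.1.1 + (1 / 2 : ℝ) • u.2.1, u.1.2 + (1 / 2 : ℝ) • u.2.2))) ∧
    ∀ u u' : (E × E) × (E × E),
      Omega12
        ((u.1.1 - (1 / 2 : ℝ) • u.2.1, u.1.2 - (1 / 2 : ℝ) • u.2.2),
         (u.1.1 + (1 / 2 : ℝ) • u.2.1, u.1.2 + (1 / 2 : ℝ) • u.2.2))
        ((u'.1.1 - (1 / 2 : ℝ) • u'.2.1, u'.1.2 - (1 / 2 : ℝ) • u'.2.2),
         (u'.1.1 + (1 / 2 : ℝ) • u'.2.1, u'.1.2 + (1 / 2 : ℝ) • u'.2.2)) =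
      tangentLiftSymp u u' := by
  constructor
  · apply Function.bijective_iff_has_inverse.mpr
    refine ⟨fun z => (((1/2:ℝ) • (z.1.1 + z.2.1), (1/2:ℝ) • (z.1.2 + z.2.2)),
      (z.2.1 - z.1.1, z.2.2 - z.1.2)), fun u => ?_, fun z => ?_⟩ <;>
      simp only [Prod.ext_iff, smul_add, smul_sub, smul_smul] <;>
      constructor <;> constructor <;> · abel_nf; simp <;> module
  · intro u u'
    simp only [Omega12, canSymp, tangentLiftSymp, inner_add_add_self, inner_sub_sub_self,
      inner_add_left, inner_add_right, inner_sub_left, inner_sub_right,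
      inner_smul_left, inner_smul_right, real_inner_comm u.1.1 u'.1.2]
    ring_nf
    simp only [starRingEnd_apply, star_trivial]
    ring
end

section
/- Let E be a real inner product space. Define Exp : {(q,ξ) ∈ E × E : ‖q‖ = 1, ⟨q,ξ⟩ = 0} → E by Exp(q,ξ) = cos(‖ξ‖) q + (sin(‖ξ‖)/‖ξ‖) ξ for ξ ≠ 0 and Exp(q,0) = q, and define R(q,ξ) = (Exp(q,−ξ/2), Exp(q,ξ/2)). Then R is a discretization map on the unit sphere: (1) both components of R(q,ξ) are unit vectors; (2) R(q,0) = (q,q); (3) for every unit vector q and every ξ with ⟨q,ξ⟩ = 0, the curve t ↦ Exp(q, tξ/2) − Exp(q, −tξ/2) is differentiable at t = 0 with derivative equal to ξ. -/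
/-! Along a ray the exponential map is the great circle
`Exp(q, s ξ) = cos(s‖ξ‖) q + (sin(s‖ξ‖)/‖ξ‖) ξ`, a smooth curve with velocity `ξ` at `s = 0`;
hence `t ↦ Exp(q, tξ/2) - Exp(q, -tξ/2)` has derivative `ξ/2 + ξ/2 = ξ` at `0`.
Unit norm comes from `q ⟂ ξ` and `cos² + sin² = 1`. -/

open scoped RealInnerProductSpace

open Classical in
/-- The exponential map of the round unit sphere:
`Exp(q,ξ) = cos(‖ξ‖) q + (sin(‖ξ‖)/‖ξ‖) ξ` for `ξ ≠ 0`, and `Exp(q,0) = q`. -/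
noncomputable def sphereExp {E : Type*} [NormedAddCommGroup E]
    [InnerProductSpace ℝ E] (q ξ : E) : E :=
  if ξ = 0 then q
  else Real.cos ‖ξ‖ • q + (Real.sin ‖ξ‖ / ‖ξ‖) • ξ

section

open Real

variable {E : Type*} [NormedAddCommGroup E] [InnerProductSpace ℝ E]

theorem norm_sphereExp {q ξ : E} (hq : ‖q‖ = 1) (hqξ : ⟪q, ξ⟫ = 0) :
    ‖sphereExp q ξ‖ = 1 := by
  by_cases hξ : ξ = 0
  · simp [sphereExp, hξ, hq]
  have hpos : 0 < ‖ξ‖ := norm_pos_iff.mpr hξ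
  have hsq : ‖sphereExp q ξ‖ ^ 2 = 1 := by
    rw [sphereExp, if_neg hξ, norm_add_sq_real, real_inner_smul_left, real_inner_smul_right,
      hqξ, norm_smul, norm_smul, hq, Real.norm_eq_abs, Real.norm_eq_abs, abs_div, abs_of_pos hpos]
    field_simp
    rw [sq_abs, sq_abs]
    linear_combination ‖ξ‖ * cos_sq_add_sin_sq ‖ξ‖
  exact (pow_eq_one_iff_of_nonneg (norm_nonneg _) two_ne_zero).mp hsq

@[simp]
theorem sphereExp_zero (q : E) : sphereExp q 0 = q := by
  simp [sphereExp]

theorem sphereExp_smul (q ξ : E) (s : ℝ) :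
    sphereExp q (s • ξ) = cos (s * ‖ξ‖) • q + (sin (s * ‖ξ‖) / ‖ξ‖) • ξ := by
  rcases eq_or_ne (s • ξ) 0 with h | h
  · rcases smul_eq_zero.mp h with rfl | rfl <;> simp
  have hs : s ≠ 0 := left_ne_zero_of_smul h
  have hξ : ‖ξ‖ ≠ 0 := norm_ne_zero_iff.mpr (right_ne_zero_of_smul h)
  rw [sphereExp, if_neg h, norm_smul, Real.norm_eq_abs, smul_smul]
  rcases abs_choice s with habs | habs <;> rw [habs]
  · congr 2; field_simp
  · rw [neg_mul, cos_neg, sin_neg]; congr 2; field_simp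

theorem hasDerivAt_sphereExp_smul (q ξ : E) (s : ℝ) :
    HasDerivAt (fun s : ℝ => sphereExp q (s • ξ))
      ((-sin (s * ‖ξ‖) * ‖ξ‖) • q + cos (s * ‖ξ‖) • ξ) s := by
  simp only [sphereExp_smul]
  have hlin : HasDerivAt (fun s : ℝ => s * ‖ξ‖) ‖ξ‖ s := by
    simpa using (hasDerivAt_id s).mul_const ‖ξ‖
  refine (hlin.cos.smul_const q).add ?_
  rcases eq_or_ne ξ 0 with rfl | hξ
  · simpa using hasDerivAt_const s (0 : E)
  have hξ' : ‖ξ‖ ≠ 0 := norm_ne_zero_iff.mpr hξ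
  convert (hlin.sin.div_const ‖ξ‖).smul_const ξ using 2
  field_simp

theorem hasDerivAt_sphereExp_smul_zero (q ξ : E) :
    HasDerivAt (fun s : ℝ => sphereExp q (s • ξ)) ξ 0 := by
  simpa using hasDerivAt_sphereExp_smul q ξ 0

end

/-- The map `R(q,ξ) = (Exp(q,-ξ/2), Exp(q,ξ/2))` is a discretization map on
the unit sphere: for every unit vector `q` and every `ξ` with `⟨q,ξ⟩ = 0`,
both components of `R(q,ξ)` are unit vectors, `R(q,0) = (q,q)`, and the curve
`t ↦ Exp(q, tξ/2) - Exp(q, -tξ/2)` is differentiable at `t = 0` with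
derivative `ξ`. -/
theorem sphereExp_discretization_map {E : Type*} [NormedAddCommGroup E]
    [InnerProductSpace ℝ E] :
    ∀ q ξ : E, ‖q‖ = 1 → ⟪q, ξ⟫ = 0 →
      (‖sphereExp q (-((1 / 2 : ℝ) • ξ))‖ = 1 ∧
        ‖sphereExp q ((1 / 2 : ℝ) • ξ)‖ = 1) ∧
      (sphereExp q (-((1 / 2 : ℝ) • (0 : E))),
        sphereExp q ((1 / 2 : ℝ) • (0 : E))) = (q, q) ∧
      HasDerivAt
        (fun t : ℝ => sphereExp q ((t / 2) • ξ) - sphereExp q (-((t / 2) • ξ)))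
        ξ 0 := by
  intro q ξ hq hqξ
  refine ⟨⟨norm_sphereExp hq ?_, norm_sphereExp hq ?_⟩, by simp, ?_⟩
  · rw [inner_neg_right, real_inner_smul_right, hqξ, mul_zero, neg_zero]
  · rw [real_inner_smul_right, hqξ, mul_zero]
  have hγ := hasDerivAt_sphereExp_smul_zero q ξ
  have hfwd := hγ.scomp_of_eq 0 ((hasDerivAt_id (0 : ℝ)).div_const 2) (by simp)
  have hbwd := hγ.scomp_of_eq 0 ((hasDerivAt_id (0 : ℝ)).neg.div_const 2) (by simp)
  convert hfwd.sub hbwd using 1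
  · ext t; simp [Function.comp_def, neg_div, neg_smul]
  · module
end

section
/- Let E be a finite-dimensional real inner product space, let L : E × E × E → ℝ be continuously differentiable, and let q : ℝ → E be four times differentiable. Denote by ∇₁L, ∇₂L, ∇₃L : E × E × E → E the partial gradients of L with respect to its three arguments (defined via the inner product). Suppose the curves P₁(t) = ∇₃L(q(t), q'(t), q''(t)) and P₀(t) = ∇₂L(q(t), q'(t), q''(t)) − P₁'(t) are differentiable and that the second-order Euler–Lagrange equation holds in the form P₀'(t) = ∇₁L(q(t), q'(t), q''(t)) for all t. Then the Lagrangian energy E_L(t) = ⟨q'(t), P₀(t)⟩ + ⟨q''(t), P₁(t)⟩ − L(q(t), q'(t), q''(t)) is constant: E_L'(t) = 0 for all t. -/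
/-!
Differentiating the energy along the curve, the chain rule writes `d/dt L(q, q', q'')` as
`⟪q', ∇₁L⟫ + ⟪q'', ∇₂L⟫ + ⟪q''', ∇₃L⟫`, while the product rule gives
`⟪q'', P₀⟫ + ⟪q', P₀'⟫ + ⟪q''', P₁⟫ + ⟪q'', P₁'⟫`. The Euler–Lagrange equation `P₀' = ∇₁L` and the
definitions `P₁ = ∇₃L`, `P₀ = ∇₂L - P₁'` make the two expressions cancel term by term.
-/

open scoped RealInnerProductSpace

theorem DifferentiableAt.fderiv_prod_apply {𝕜 E F G : Type*} [NontriviallyNormedField 𝕜]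
    [NormedAddCommGroup E] [NormedSpace 𝕜 E] [NormedAddCommGroup F] [NormedSpace 𝕜 F]
    [NormedAddCommGroup G] [NormedSpace 𝕜 G] {f : E × F → G} {x : E} {y : F}
    (hf : DifferentiableAt 𝕜 f (x, y)) (u : E) (v : F) :
    fderiv 𝕜 f (x, y) (u, v) =
      fderiv 𝕜 (fun x' => f (x', y)) x u + fderiv 𝕜 (fun y' => f (x, y')) y v := by
  have hx : HasFDerivAt (fun x' => f (x', y)) ((fderiv 𝕜 f (x, y)).comp (.inl 𝕜 E F)) x :=
    hf.hasFDerivAt.comp x (hasFDerivAt_prodMk_left x y)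
  have hy : HasFDerivAt (fun y' => f (x, y')) ((fderiv 𝕜 f (x, y)).comp (.inr 𝕜 E F)) y :=
    hf.hasFDerivAt.comp y (hasFDerivAt_prodMk_right x y)
  rw [hx.fderiv, hy.fderiv, ContinuousLinearMap.comp_apply, ContinuousLinearMap.comp_apply,
    ← map_add, ContinuousLinearMap.inl_apply, ContinuousLinearMap.inr_apply, Prod.mk_add_mk,
    add_zero, zero_add]

section Gradient

variable {E₁ E₂ E₃ : Type*}
  [NormedAddCommGroup E₁] [InnerProductSpace ℝ E₁] [CompleteSpace E₁]
  [NormedAddCommGroup E₂] [InnerProductSpace ℝ E₂] [CompleteSpace E₂]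
  [NormedAddCommGroup E₃] [InnerProductSpace ℝ E₃] [CompleteSpace E₃]

theorem DifferentiableAt.fderiv_prod₃_apply_eq_inner_gradient
    {L : E₁ × E₂ × E₃ → ℝ} {a : E₁} {b : E₂} {c : E₃} (hL : DifferentiableAt ℝ L (a, b, c))
    (u : E₁) (v : E₂) (w : E₃) :
    fderiv ℝ L (a, b, c) (u, v, w) =
      ⟪u, gradient (fun x => L (x, b, c)) a⟫ + ⟪v, gradient (fun y => L (a, y, c)) b⟫
        + ⟪w, gradient (fun z => L (a, b, z)) c⟫ := by
  have hbc : DifferentiableAt ℝ (fun yz => L (a, yz)) (b, c) :=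
    hL.comp (b, c) (hasFDerivAt_prodMk_right a (b, c)).differentiableAt
  simp only [hL.fderiv_prod_apply, hbc.fderiv_prod_apply, inner_gradient_right, conj_trivial,
    add_assoc]

theorem HasDerivAt.comp_prod₃_eq_inner_gradient
    {L : E₁ × E₂ × E₃ → ℝ} {γ₁ : ℝ → E₁} {γ₂ : ℝ → E₂} {γ₃ : ℝ → E₃} {v₁ : E₁} {v₂ : E₂}
    {v₃ : E₃} {t : ℝ} (hL : DifferentiableAt ℝ L (γ₁ t, γ₂ t, γ₃ t))
    (h₁ : HasDerivAt γ₁ v₁ t) (h₂ : HasDerivAt γ₂ v₂ t) (h₃ : HasDerivAt γ₃ v₃ t) :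
    HasDerivAt (fun s => L (γ₁ s, γ₂ s, γ₃ s))
      (⟪v₁, gradient (fun x => L (x, γ₂ t, γ₃ t)) (γ₁ t)⟫
        + ⟪v₂, gradient (fun y => L (γ₁ t, y, γ₃ t)) (γ₂ t)⟫
        + ⟪v₃, gradient (fun z => L (γ₁ t, γ₂ t, z)) (γ₃ t)⟫) t := by
  rw [← hL.fderiv_prod₃_apply_eq_inner_gradient]
  exact hL.hasFDerivAt.comp_hasDerivAt t (h₁.prodMk (h₂.prodMk h₃))

end Gradient

theorem secondOrder_lagrangian_energy_conservation_general {E : Type*}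
    [NormedAddCommGroup E] [InnerProductSpace ℝ E] [FiniteDimensional ℝ E]
    (L : E × E × E → ℝ) (hL : ContDiff ℝ 1 L)
    (q : ℝ → E)
    (hq1 : Differentiable ℝ q)
    (hq2 : Differentiable ℝ (deriv q))
    (hq3 : Differentiable ℝ (deriv (deriv q)))
    (P₁ P₀ : ℝ → E)
    (hP₁def : ∀ t, P₁ t =
      gradient (fun c : E => L (q t, deriv q t, c)) (deriv (deriv q) t))
    (hP₁diff : Differentiable ℝ P₁)
    (hP₀def : ∀ t, P₀ t =
      gradient (fun b : E => L (q t, b, deriv (deriv q) t)) (deriv q t)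
        - deriv P₁ t)
    (hP₀diff : Differentiable ℝ P₀)
    (hEL : ∀ t, deriv P₀ t =
      gradient (fun a : E => L (a, deriv q t, deriv (deriv q) t)) (q t)) :
    ∀ t, deriv (fun s : ℝ =>
      ⟪deriv q s, P₀ s⟫ + ⟪deriv (deriv q) s, P₁ s⟫
        - L (q s, deriv q s, deriv (deriv q) s)) t = 0 := by
  intro t
  have hLagrangian := HasDerivAt.comp_prod₃_eq_inner_gradient
    (hL.differentiable one_ne_zero _) (hq1 t).hasDerivAt (hq2 t).hasDerivAt (hq3 t).hasDerivAt
  have hEnergy : HasDerivAt (fun s : ℝ => ⟪deriv q s, P₀ s⟫ + ⟪deriv (deriv q) s, P₁ s⟫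
      - L (q s, deriv q s, deriv (deriv q) s)) _ t :=
    (((hq2 t).hasDerivAt.inner ℝ (hP₀diff t).hasDerivAt).add
      ((hq3 t).hasDerivAt.inner ℝ (hP₁diff t).hasDerivAt)).sub hLagrangian
  rw [hEnergy.deriv, hEL t, hP₀def t, hP₁def t, inner_sub_right]
  ring

/-- Conservation of the Lagrangian energy for a second-order Lagrangian
`L(q, q̇, q̈)` on a finite-dimensional real inner product space: if along a
four times differentiable curve `q` the generalized momenta
`P₁ = ∇₃L(q, q', q'')` and `P₀ = ∇₂L(q, q', q'') - P₁'` are differentiable and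
the second-order Euler–Lagrange equation `P₀' = ∇₁L(q, q', q'')` holds, then
the energy `E_L = ⟨q', P₀⟩ + ⟨q'', P₁⟩ - L(q, q', q'')` is constant. Here
`∇ᵢL` denote the partial gradients of `L` with respect to the inner product. -/
theorem secondOrder_lagrangian_energy_conservation {E : Type*}
    [NormedAddCommGroup E] [InnerProductSpace ℝ E] [FiniteDimensional ℝ E]
    (L : E × E × E → ℝ) (hL : ContDiff ℝ 1 L)
    (q : ℝ → E)
    (hq1 : Differentiable ℝ q)
    (hq2 : Differentiable ℝ (deriv q))
    (hq3 : Differentiable ℝ (deriv (deriv q)))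
    (hq4 : Differentiable ℝ (deriv (deriv (deriv q))))
    (P₁ P₀ : ℝ → E)
    (hP₁def : ∀ t, P₁ t =
      gradient (fun c : E => L (q t, deriv q t, c)) (deriv (deriv q) t))
    (hP₁diff : Differentiable ℝ P₁)
    (hP₀def : ∀ t, P₀ t =
      gradient (fun b : E => L (q t, b, deriv (deriv q) t)) (deriv q t)
        - deriv P₁ t)
    (hP₀diff : Differentiable ℝ P₀)
    (hEL : ∀ t, deriv P₀ t =
      gradient (fun a : E => L (a, deriv q t, deriv (deriv q) t)) (q t)) :
    ∀ t, deriv (fun s : ℝ =>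
      ⟪deriv q s, P₀ s⟫ + ⟪deriv (deriv q) s, P₁ s⟫
        - L (q s, deriv q s, deriv (deriv q) s)) t = 0 :=
  secondOrder_lagrangian_energy_conservation_general L hL q hq1 hq2 hq3 P₁ P₀ hP₁def hP₁diff hP₀def
    hP₀diff hEL
end

section
/- Let E be a finite-dimensional real inner product space and h ∈ ℝ. Define the linear map Φ_h : E⁴ → E⁴ by Φ_h(q, v, a, b) = (q + h v + (h²/2) b − (h³/4) a, v + h b − (h²/2) a, a, b − h a). Then Φ_h preserves the canonical symplectic form on T*(TE) ≅ E⁴: for all u = (q,v,a,b) and u' = (q',v',a',b') in E⁴, Ω(Φ_h(u), Φ_h(u')) = Ω(u,u'), where Ω(u,u') = ⟨q,a'⟩ − ⟨q',a⟩ + ⟨v,b'⟩ − ⟨v',b⟩. Hence the numerical scheme for the optimal control Hamiltonian H(q,v,a,b) = ½‖b‖² + ⟨a,v⟩ generated by the cotangent lift of the midpoint discretization map is a symplectic integrator. -/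
open scoped RealInnerProductSpace

/-- The canonical symplectic form on `T*(TE) ≅ E⁴` with coordinates
`(q, v, a, b)` (positions-velocities and their conjugate momenta):
`Ω(u,u') = ⟨q,a'⟩ - ⟨q',a⟩ + ⟨v,b'⟩ - ⟨v',b⟩`. -/
noncomputable def canSympTT {E : Type*} [NormedAddCommGroup E]
    [InnerProductSpace ℝ E] (u u' : E × E × E × E) : ℝ :=
  ⟪u.1, u'.2.2.1⟫ - ⟪u'.1, u.2.2.1⟫ + ⟪u.2.1, u'.2.2.2⟫ - ⟪u'.2.1, u.2.2.2⟫

/-- The one-step map of the numerical scheme for the optimal control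
Hamiltonian `H(q,v,a,b) = ½‖b‖² + ⟨a,v⟩` generated by the cotangent lift of
the midpoint discretization map:
`Φ_h(q,v,a,b) = (q + hv + (h²/2)b - (h³/4)a, v + hb - (h²/2)a, a, b - ha)`. -/
noncomputable def schemeMap {E : Type*} [NormedAddCommGroup E]
    [InnerProductSpace ℝ E] (h : ℝ) (u : E × E × E × E) : E × E × E × E :=
  (u.1 + h • u.2.1 + (h ^ 2 / 2) • u.2.2.2 - (h ^ 3 / 4) • u.2.2.1,
   u.2.1 + h • u.2.2.2 - (h ^ 2 / 2) • u.2.2.1,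
   u.2.2.1,
   u.2.2.2 - h • u.2.2.1)

/-- The linear map `Φ_h` preserves the canonical symplectic form on
`T*(TE) ≅ E⁴`; hence the numerical scheme for the optimal control Hamiltonian
`H(q,v,a,b) = ½‖b‖² + ⟨a,v⟩` generated by the cotangent lift of the midpoint
discretization map is a symplectic integrator. -/
theorem schemeMap_symplectic {E : Type*} [NormedAddCommGroup E]
    [InnerProductSpace ℝ E] [FiniteDimensional ℝ E] (h : ℝ) :
    IsLinearMap ℝ (schemeMap (E := E) h) ∧
    ∀ u u' : E × E × E × E,
      canSympTT (schemeMap h u) (schemeMap h u') = canSympTT u u' := by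
  constructor
  · constructor
    · rintro ⟨q, v, a, b⟩ ⟨q', v', a', b'⟩
      simp only [schemeMap, Prod.mk_add_mk, smul_add]
      refine Prod.ext ?_ (Prod.ext ?_ (Prod.ext ?_ ?_)) <;> abel
    · rintro c ⟨q, v, a, b⟩
      simp only [schemeMap, Prod.smul_mk, smul_sub, smul_add, smul_comm c]
  · rintro ⟨q, v, a, b⟩ ⟨q', v', a', b'⟩
    simp only [canSympTT, schemeMap, inner_add_left, inner_add_right,
      inner_sub_left, inner_sub_right, inner_smul_left, inner_smul_right,
      real_inner_comm q', real_inner_comm v', real_inner_comm a', real_inner_comm b',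
      starRingEnd_apply, star_trivial]
    ring
end
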